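/- arXiv:1807.03928 — 2 statements merged into one kernel-verified Lean document; each statement's English description precedes it below -/
import Mathlib

section
/- Let R be a commutative ring of prime characteristic p, let q = p^e, and suppose φ : F^e_* R → R is an R-linear map (i.e. additive with φ(r^q · x) = r · φ(x)) and f ∈ R satisfies φ(f) = 1. Then for every m ≥ 1 there exist e' and an R-linear map ψ : F^{e'}_* R → R, obtained as a composition of maps of the form φ precomposed with multiplication by elements of R, such that ψ(f^m) = 1. -/
/-- If `φ : F^e_* R → R` is `R`-linear with `φ f = 1`, then for every `m ≥ 1` there is an
`R`-linear map `ψ : F^{e'}_* R → R` with `ψ (f^m) = 1`. -/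
theorem stmt2 {R : Type*} [CommRing R] (p : ℕ) (hp : p.Prime) [CharP R p]
    (e : ℕ) (φ : R → R)
    (hadd : ∀ x y : R, φ (x + y) = φ x + φ y)
    (hlin : ∀ r x : R, φ (r ^ p ^ e * x) = r * φ x)
    (f : R) (hf : φ f = 1) :
    ∀ m : ℕ, 1 ≤ m → ∃ (e' : ℕ) (ψ : R → R),
      (∀ x y : R, ψ (x + y) = ψ x + ψ y) ∧
      (∀ r x : R, ψ (r ^ p ^ e' * x) = r * ψ x) ∧
      ψ (f ^ m) = 1 := by
  intro m hm
  induction m, hm using Nat.le_induction with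
  | base =>
    exact ⟨e, φ, hadd, hlin, by simpa using hf⟩
  | succ m hm ih =>
    obtain ⟨d, ψ, hψadd, hψlin, hψf⟩ := ih
    have hpe : 1 ≤ p ^ e := Nat.one_le_pow _ _ hp.pos
    have hc : m ≤ p ^ e * m := Nat.le_mul_of_pos_left m (by omega)
    refine ⟨e + d, fun x => ψ (φ (f ^ (p ^ e * m - m) * x)), ?_, ?_, ?_⟩
    · intro x y
      dsimp only
      rw [mul_add, hadd, hψadd]
    · intro r x
      dsimp only
      have h1 : f ^ (p ^ e * m - m) * (r ^ p ^ (e + d) * x)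
          = (r ^ p ^ d) ^ p ^ e * (f ^ (p ^ e * m - m) * x) := by
        rw [← pow_mul, ← pow_add, Nat.add_comm d e]
        ring
      rw [h1, hlin, hψlin]
    · dsimp only
      have h2 : f ^ (p ^ e * m - m) * f ^ (m + 1)
          = (f ^ m) ^ p ^ e * f := by
        rw [← pow_mul, ← pow_add, ← pow_succ, Nat.mul_comm m]
        congr 1
        omega
      rw [h2, hlin, hf, mul_one, hψf]
end

section
/- With the hypotheses of the previous balancing identity, and additionally assuming b_k − a_k ≡ 0 (mod q) for every k, define μ_{+,k} = (b_k − a_k)/q if b_k ≥ a_k and 0 otherwise. Then Σ_{j=0}^s ⌊(Σ_{k=1}^n b_{j,k})/q⌋ ≥ Σ_{k=1}^n μ_{+,k}. -/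
/-- With the hypotheses of the balancing identity and `b_k ≡ a_k (mod q)` for all `k`,
setting `μ_{+,k} = (b_k - a_k)/q` when `b_k ≥ a_k` and `0` otherwise, one has
`Σ_j ⌊(Σ_k b_{j,k})/q⌋ ≥ Σ_k μ_{+,k}`. -/
theorem stmt10 (q n r s : ℕ) (hq : 2 ≤ q) (hn : 1 ≤ n) (hr : 1 ≤ r) (hs : 1 ≤ s)
    (a : Fin (r + 1) → Fin n → ℕ) (b : Fin (s + 1) → Fin n → ℕ)
    (ha : ∀ i k, a i k ≤ q - 1) (hb : ∀ j k, b j k ≤ q - 1)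
    (ha0 : (∑ k, a 0 k) % q = 1) (hb0 : (∑ k, b 0 k) % q = 1)
    (hai : ∀ i : Fin (r + 1), i ≠ 0 → (∑ k, a i k) % q = 0)
    (hbj : ∀ j : Fin (s + 1), j ≠ 0 → (∑ k, b j k) % q = 0)
    (hdiv : ∀ k : Fin n, (∑ j, b j k) % q = (∑ i, a i k) % q) :
    ∑ k : Fin n,
        (if (∑ i, a i k) ≤ (∑ j, b j k) then ((∑ j, b j k) - (∑ i, a i k)) / q else 0) ≤
      ∑ j : Fin (s + 1), (∑ k, b j k) / q := by
  set L : ℕ := ∑ k : Fin n,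
      (if (∑ i, a i k) ≤ (∑ j, b j k) then ((∑ j, b j k) - (∑ i, a i k)) / q else 0) with hL
  set R : ℕ := ∑ j : Fin (s + 1), (∑ k, b j k) / q with hR
  set S : ℕ := ∑ j : Fin (s + 1), ∑ k, b j k with hS
  -- sum of mods is 1
  have hmods : ∑ j : Fin (s + 1), (∑ k, b j k) % q = 1 := by
    rw [Finset.sum_eq_single_of_mem 0 (Finset.mem_univ _)
      (fun j _ hj => hbj j hj)]
    exact hb0
  -- S % q = 1
  have hSmod : S % q = 1 := by
    rw [hS, Finset.sum_nat_mod]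
    simp only [hmods]
    exact Nat.one_mod_eq_one.mpr (by omega)
  -- 1 + q * R = S
  have hRS : 1 + q * R = S := by
    rw [hR, hS, Finset.mul_sum]
    nth_rewrite 1 [← hmods]
    rw [← Finset.sum_add_distrib]
    exact Finset.sum_congr rfl fun j _ => Nat.mod_add_div _ _
  -- q * L ≤ S
  have hLS : q * L ≤ S := by
    have hswap : S = ∑ k : Fin n, ∑ j, b j k := Finset.sum_comm
    rw [hL, Finset.mul_sum, hswap]
    apply Finset.sum_le_sum
    intro k _
    split
    · next h =>
      have hd : q ∣ (∑ j, b j k) - (∑ i, a i k) :=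
        Nat.dvd_of_mod_eq_zero (Nat.sub_mod_eq_zero_of_mod_eq (hdiv k))
      rw [Nat.mul_div_cancel' hd]
      omega
    · exact Nat.zero_le _
  have hne : q * L ≠ S := by
    intro h
    have : (q * L) % q = 1 := h ▸ hSmod
    rw [Nat.mul_mod_right] at this
    omega
  have : q * L ≤ q * R := by omega
  exact Nat.le_of_mul_le_mul_left this (by omega)
end
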